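/- Let G be a greedy numeration system basis and let N ∈ ℕ with G_k ≤ N < G_{k+1} and N < G_{k+1} − 1. Then the carry propagation of N in the G-system equals the carry propagation of N mod G_k: cp_G(N) = cp_G(N mod G_k). -/

import Mathlib

open Filter Topology

/-- Remainders of the greedy algorithm for the basis `G`, run top-down from
position `N - 1` (for `N < G N`, all digits of `N` lie below position `N`):
`greedyRem G N t` is the part of `N` remaining to be represented on the
positions `< N - t`. -/
def greedyRem (G : ℕ → ℕ) (N : ℕ) : ℕ → ℕ
  | 0 => N
  | t + 1 => greedyRem G N t % G (N - t - 1)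

/-- The digit at position `j` (least significant digit at position `0`) of the
greedy `G`-expansion of `N`, padded with zeros. -/
def greedyDigit (G : ℕ → ℕ) (N j : ℕ) : ℕ :=
  if j < N then greedyRem G N (N - 1 - j) / G j else 0

/-- Length of the longest common prefix of two words. -/
def lcpLen : List ℕ → List ℕ → ℕ
  | a :: u, b :: v => if a = b then lcpLen u v + 1 else 0
  | _, _ => 0

/-- `Delta u v`: if `|u| = |v|`, the length of `u` minus the length of the longest
common prefix of `u` and `v`; otherwise `max |u| |v|` (padding convention). -/
def Delta (u v : List ℕ) : ℕ :=
  if u.length = v.length then u.length - lcpLen u v else max u.length v.length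

/-- Number of digits of the greedy `G`-expansion of `N`: the least `ℓ` with
`N < G ℓ`. -/
noncomputable def greedyLen (G : ℕ → ℕ) (N : ℕ) : ℕ := sInf {ℓ | N < G ℓ}

/-- The greedy `G`-expansion of `N`, most significant digit first. -/
noncomputable def greedyRep (G : ℕ → ℕ) (N : ℕ) : List ℕ :=
  ((List.range (greedyLen G N)).map (greedyDigit G N)).reverse

/-- Carry propagation at `N` in the greedy numeration system `G`. -/
noncomputable def greedyCp (G : ℕ → ℕ) (N : ℕ) : ℕ :=
  Delta (greedyRep G N) (greedyRep G (N + 1))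

/-!
Let `r = N % G k`. As `N + 1 < G (k + 1)`, the greedy expansions of `N` and `N + 1`, padded to
`k + 1` digits, are obtained by one division by `G k`: the leading digits are `N / G k` and
`(N + 1) / G k`, the others are those of `r` and of `(N + 1) % G k = (r + 1) % G k`. Padding `r`
and `r + 1` to `k + 1` digits gives leading digits `0` and `(r + 1) / G k` and the same lower
digits. For words of a common padded length `n`, the carry propagation is `n` minus the length of
the common prefix, and in both pairs the leading digits differ exactly when `G k ∣ r + 1`.
-/

lemma lcpLen_cons_cons (a b : ℕ) (u v : List ℕ) :
    lcpLen (a :: u) (b :: v) = if a = b then lcpLen u v + 1 else 0 := rfl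

lemma lcpLen_append_left : ∀ w u v : List ℕ, lcpLen (w ++ u) (w ++ v) = w.length + lcpLen u v
  | [], _, _ => by simp
  | a :: w, u, v => by
    rw [List.cons_append, List.cons_append, lcpLen_cons_cons, if_pos rfl, lcpLen_append_left w,
      List.length_cons, Nat.add_right_comm]

section GreedyNumeration

variable {G : ℕ → ℕ}

lemma lt_apply_self (hG : StrictMono G) (hG0 : G 0 = 1) (n : ℕ) : n < G n := by
  simpa [hG0] using hG.add_le_nat n 0

/-- The part of `x` that the greedy algorithm still has to write on the positions `< j`. -/
def greedyRemBelow (G : ℕ → ℕ) (x j : ℕ) : ℕ := greedyRem G x (x - j)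

lemma greedyRemBelow_of_lt (hG : Monotone G) {x j : ℕ} (h : x < G j) :
    greedyRemBelow G x j = x := by
  unfold greedyRemBelow
  obtain ⟨t, ht⟩ : ∃ t, x - j = t := ⟨_, rfl⟩
  rw [ht]
  induction t generalizing j with
  | zero => rfl
  | succ t ih =>
    have hGj : x < G (j + 1) := h.trans_le (hG (Nat.le_succ j))
    rw [greedyRem, ih hGj (by omega), show x - t - 1 = j by omega, Nat.mod_eq_of_lt h]

lemma greedyRemBelow_eq_mod (hG : StrictMono G) (hG0 : G 0 = 1) (x j : ℕ) :
    greedyRemBelow G x j = greedyRemBelow G x (j + 1) % G j := by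
  by_cases hjx : j < x
  · rw [greedyRemBelow, greedyRemBelow, show x - j = x - (j + 1) + 1 by omega, greedyRem,
      show x - (x - (j + 1)) - 1 = j by omega]
  · have hx : x < G j := (Nat.le_of_not_lt hjx).trans_lt (lt_apply_self hG hG0 j)
    rw [greedyRemBelow_of_lt hG.monotone hx,
      greedyRemBelow_of_lt hG.monotone (hx.trans (hG (Nat.lt_succ_self j))), Nat.mod_eq_of_lt hx]

lemma greedyDigit_eq_div (hG : StrictMono G) (hG0 : G 0 = 1) (x j : ℕ) :
    greedyDigit G x j = greedyRemBelow G x (j + 1) / G j := by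
  unfold greedyDigit
  split_ifs with hjx
  · rw [greedyRemBelow, Nat.sub_sub, Nat.add_comm]
  · have hx : x < G j := (Nat.le_of_not_lt hjx).trans_lt (lt_apply_self hG hG0 j)
    rw [greedyRemBelow_of_lt hG.monotone (hx.trans (hG (Nat.lt_succ_self j))),
      Nat.div_eq_of_lt hx]

lemma greedyRemBelow_mod (hG : StrictMono G) (hG0 : G 0 = 1) {k x : ℕ} (hx : x < G (k + 1))
    {j : ℕ} (hj : j ≤ k) : greedyRemBelow G x j = greedyRemBelow G (x % G k) j := by
  induction hj using Nat.decreasingInduction with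
  | self =>
    have hGk : 0 < G k := Nat.zero_lt_of_lt (lt_apply_self hG hG0 k)
    rw [greedyRemBelow_eq_mod hG hG0, greedyRemBelow_of_lt hG.monotone hx,
      greedyRemBelow_of_lt hG.monotone (Nat.mod_lt x hGk)]
  | of_succ j _ ih =>
    rw [greedyRemBelow_eq_mod hG hG0 x, greedyRemBelow_eq_mod hG hG0 (x % G k), ih]

lemma greedyDigit_mod (hG : StrictMono G) (hG0 : G 0 = 1) {k x j : ℕ} (hx : x < G (k + 1))
    (hj : j < k) : greedyDigit G x j = greedyDigit G (x % G k) j := by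
  rw [greedyDigit_eq_div hG hG0, greedyDigit_eq_div hG hG0, greedyRemBelow_mod hG hG0 hx hj]

lemma greedyDigit_of_lt_succ (hG : StrictMono G) (hG0 : G 0 = 1) {x j : ℕ}
    (hx : x < G (j + 1)) : greedyDigit G x j = x / G j := by
  rw [greedyDigit_eq_div hG hG0, greedyRemBelow_of_lt hG.monotone hx]

lemma greedyDigit_of_lt (hG : StrictMono G) (hG0 : G 0 = 1) {x j : ℕ} (hx : x < G j) :
    greedyDigit G x j = 0 := by
  rw [greedyDigit_of_lt_succ hG hG0 (hx.trans (hG (Nat.lt_succ_self j))), Nat.div_eq_of_lt hx]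

lemma lt_apply_greedyLen (hG : StrictMono G) (hG0 : G 0 = 1) (x : ℕ) :
    x < G (greedyLen G x) :=
  Nat.sInf_mem (s := {ℓ | x < G ℓ}) ⟨x, lt_apply_self hG hG0 x⟩

lemma greedyLen_le {x n : ℕ} (h : x < G n) : greedyLen G x ≤ n := Nat.sInf_le h

lemma apply_pred_greedyLen_le {x : ℕ} (hℓ : 0 < greedyLen G x) :
    G (greedyLen G x - 1) ≤ x :=
  Nat.le_of_not_lt (Nat.notMem_of_lt_sInf (s := {ℓ | x < G ℓ}) (Nat.sub_lt hℓ Nat.one_pos))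

lemma greedyDigit_pred_greedyLen_ne_zero (hG : StrictMono G) (hG0 : G 0 = 1) {x : ℕ}
    (hℓ : 0 < greedyLen G x) : greedyDigit G x (greedyLen G x - 1) ≠ 0 := by
  have hx : x < G (greedyLen G x - 1 + 1) := by
    rw [Nat.sub_add_cancel hℓ]
    exact lt_apply_greedyLen hG hG0 x
  rw [greedyDigit_of_lt_succ hG hG0 hx]
  exact (Nat.div_pos (apply_pred_greedyLen_le hℓ)
    (Nat.zero_lt_of_lt (lt_apply_self hG hG0 _))).ne'

lemma greedyLen_pos (hG : StrictMono G) (hG0 : G 0 = 1) {x : ℕ} (hx : 0 < x) :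
    0 < greedyLen G x := by
  refine Nat.pos_of_ne_zero fun h => ?_
  have := lt_apply_greedyLen hG hG0 x
  rw [h, hG0] at this
  omega

lemma greedyRep_length (G : ℕ → ℕ) (x : ℕ) : (greedyRep G x).length = greedyLen G x := by
  simp [greedyRep]

/-- The paper's `rep_{G,n}(x)`: the greedy expansion of `x` left-padded with zeros to `n` digits
(truncated to the positions `< n` if it is longer). -/
def greedyRepPad (G : ℕ → ℕ) (x n : ℕ) : List ℕ :=
  ((List.range n).map (greedyDigit G x)).reverse

lemma greedyRep_eq_greedyRepPad (G : ℕ → ℕ) (x : ℕ) :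
    greedyRep G x = greedyRepPad G x (greedyLen G x) := rfl

lemma greedyRepPad_succ (G : ℕ → ℕ) (x n : ℕ) :
    greedyRepPad G x (n + 1) = greedyDigit G x n :: greedyRepPad G x n := by
  simp [greedyRepPad, List.range_succ]

lemma greedyRepPad_eq_replicate_append (hG : StrictMono G) (hG0 : G 0 = 1) {x ℓ n : ℕ}
    (hx : x < G ℓ) (hℓn : ℓ ≤ n) :
    greedyRepPad G x n = List.replicate (n - ℓ) 0 ++ greedyRepPad G x ℓ := by
  induction n, hℓn using Nat.le_induction with
  | base => simp
  | succ n hℓn ih =>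
    rw [greedyRepPad_succ, ih, greedyDigit_of_lt hG hG0 (hx.trans_le (hG.monotone hℓn)),
      Nat.sub_add_comm hℓn, List.replicate_succ, List.cons_append]

lemma greedyRepPad_succ_eq_cons (hG : StrictMono G) (hG0 : G 0 = 1) {x k : ℕ}
    (hx : x < G (k + 1)) :
    greedyRepPad G x (k + 1) = x / G k :: greedyRepPad G (x % G k) k := by
  rw [greedyRepPad_succ, greedyDigit_of_lt_succ hG hG0 hx, greedyRepPad, greedyRepPad]
  congr 2
  exact List.map_congr_left fun j hj => greedyDigit_mod hG hG0 hx (List.mem_range.mp hj)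

/-- When `x + 1` has more digits than `x`, the padded expansion of `x` starts with `0` and
that of `x + 1` does not, so the padding convention of `Delta` agrees with the
equal-length formula. -/
lemma greedyCp_eq_sub_lcpLen_greedyLen (hG : StrictMono G) (hG0 : G 0 = 1) (x : ℕ) :
    greedyCp G x = greedyLen G (x + 1) - lcpLen (greedyRepPad G x (greedyLen G (x + 1)))
      (greedyRepPad G (x + 1) (greedyLen G (x + 1))) := by
  have hlen : greedyLen G x ≤ greedyLen G (x + 1) :=
    greedyLen_le ((Nat.lt_succ_self x).trans (lt_apply_greedyLen hG hG0 (x + 1)))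
  rw [greedyCp, Delta, greedyRep_length, greedyRep_length]
  rcases hlen.lt_or_eq with hlt | heq
  · obtain ⟨m, hm⟩ : ∃ m, greedyLen G (x + 1) = m + 1 :=
      Nat.exists_eq_succ_of_ne_zero (greedyLen_pos hG hG0 (Nat.succ_pos x)).ne'
    have hx0 : greedyDigit G x m = 0 :=
      greedyDigit_of_lt hG hG0 ((lt_apply_greedyLen hG hG0 x).trans_le (hG.monotone (by omega)))
    have hx1 : greedyDigit G (x + 1) m ≠ 0 := by
      simpa [hm] using greedyDigit_pred_greedyLen_ne_zero hG hG0 (x := x + 1) (by omega)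
    rw [if_neg hlt.ne, max_eq_right hlt.le, hm, greedyRepPad_succ, greedyRepPad_succ,
      lcpLen_cons_cons, hx0, if_neg (Ne.symm hx1), Nat.sub_zero]
  · rw [if_pos heq, greedyRep_eq_greedyRepPad, greedyRep_eq_greedyRepPad, heq]

lemma greedyCp_eq_sub_lcpLen (hG : StrictMono G) (hG0 : G 0 = 1) {x n : ℕ}
    (hx : x + 1 < G n) :
    greedyCp G x = n - lcpLen (greedyRepPad G x n) (greedyRepPad G (x + 1) n) := by
  have hℓn : greedyLen G (x + 1) ≤ n := greedyLen_le hx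
  have hx1 := lt_apply_greedyLen hG hG0 (x + 1)
  rw [greedyRepPad_eq_replicate_append hG hG0 hx1 hℓn,
    greedyRepPad_eq_replicate_append hG hG0 (Nat.lt_of_succ_lt hx1) hℓn, lcpLen_append_left,
    List.length_replicate, greedyCp_eq_sub_lcpLen_greedyLen hG hG0]
  omega

end GreedyNumeration

theorem carry_stmt18_general (G : ℕ → ℕ) (hG : StrictMono G) (hG0 : G 0 = 1)
    (k N : ℕ) (h2 : N + 1 < G (k + 1)) :
    greedyCp G N = greedyCp G (N % G k) := by
  have hGk : 0 < G k := Nat.zero_lt_of_lt (lt_apply_self hG hG0 k)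
  set M := N % G k
  have hM : M < G k := Nat.mod_lt N hGk
  have hM1 : M + 1 < G (k + 1) := (Nat.succ_le_of_lt hM).trans_lt (hG (Nat.lt_succ_self k))
  have hmod : (N + 1) % G k = (M + 1) % G k := ((Nat.mod_modEq N (G k)).add_right 1).symm
  have hdvd : G k ∣ N + 1 ↔ G k ∣ M + 1 := by simp only [Nat.dvd_iff_mod_eq_zero, hmod]
  rw [greedyCp_eq_sub_lcpLen hG hG0 h2, greedyCp_eq_sub_lcpLen hG hG0 hM1,
    greedyRepPad_succ_eq_cons hG hG0 (Nat.lt_of_succ_lt h2), greedyRepPad_succ_eq_cons hG hG0 h2,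
    greedyRepPad_succ_eq_cons hG hG0 (hM.trans (hG (Nat.lt_succ_self k))),
    greedyRepPad_succ_eq_cons hG hG0 hM1, Nat.mod_eq_of_lt hM, Nat.div_eq_of_lt hM, hmod]
  simp only [Nat.succ_div (a := N), Nat.succ_div (a := M), Nat.div_eq_of_lt hM, hdvd]
  by_cases hcarry : G k ∣ M + 1 <;> simp [lcpLen_cons_cons, hcarry, M]

/-- For a greedy numeration system `G` and `N` with `G_k ≤ N < G_{k+1} - 1`,
the carry propagation at `N` equals the carry propagation at `N mod G_k`. -/
theorem carry_stmt18 (G : ℕ → ℕ) (hG : StrictMono G) (hG0 : G 0 = 1)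
    (k N : ℕ) (h1 : G k ≤ N) (h2 : N + 1 < G (k + 1)) :
    greedyCp G N = greedyCp G (N % G k) :=
  carry_stmt18_general G hG hG0 k N h2
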